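/- arXiv:2304.05909 — 2 statements merged into one kernel-verified Lean document; each statement's English description precedes it below -/
import Mathlib

section
/- For every R > 0 there exists a Hilbert (orthonormal) basis (Ψ_n)_{n ∈ ℕ} of L²((-R,R)) such that for each n ∈ ℕ, Ψ_n is the equivalence class of the function x ↦ p_n(x)·e^x for some real polynomial p_n of degree exactly n. (This basis, obtained by Gram–Schmidt orthonormalization of the sequence x^n e^x, is called the polynomial-exponential basis.) -/
/-!
A polynomial vanishing on an interval is zero, so the functions `xⁿ eˣ` are linearly independent
in `L²((-R, R))`. Their span is dense: bounded continuous functions are dense in `L²`, and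
Weierstrass approximation of `g(x) e⁻ˣ` on `[-R, R]` gives polynomials `q` with `q(x) eˣ`
uniformly, hence in `L²`, close to `g`. Gram–Schmidt keeps the span, and its `n`-th vector is a
multiple of `(xⁿ - r(x)) eˣ` with `deg r < n`, because it subtracts from `xⁿ eˣ` a combination of
the earlier vectors.
-/

open MeasureTheory Polynomial Set InnerProductSpace
open scoped ENNReal

noncomputable section

namespace InnerProductSpace

variable {𝕜 E : Type*} [RCLike 𝕜] [NormedAddCommGroup E] [InnerProductSpace 𝕜 E]
  {ι : Type*} [LinearOrder ι] [LocallyFiniteOrderBot ι] [WellFoundedLT ι]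

theorem sub_gramSchmidt_mem_span_Iio (f : ι → E) (n : ι) :
    f n - gramSchmidt 𝕜 f n ∈ Submodule.span 𝕜 (f '' Iio n) := by
  rw [gramSchmidt_def, sub_sub_cancel, ← span_gramSchmidt_Iio]
  refine Submodule.sum_mem _ fun i hi => ?_
  rw [Submodule.starProjection_singleton]
  exact Submodule.smul_mem _ _ (Submodule.subset_span (mem_image_of_mem _ (Finset.mem_Iio.1 hi)))

end InnerProductSpace

theorem MeasureTheory.Lp.dist_le_of_ae_bound {α E : Type*} [MeasurableSpace α] {μ : Measure α}
    [IsFiniteMeasure μ] [NormedAddCommGroup E] {p : ℝ≥0∞} [Fact (1 ≤ p)] {f g : Lp E p μ} {C : ℝ}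
    (hC : 0 ≤ C) (hfg : ∀ᵐ x ∂μ, ‖f x - g x‖ ≤ C) :
    dist f g ≤ measureUnivNNReal μ ^ p.toReal⁻¹ * C := by
  rw [_root_.dist_eq_norm]
  refine Lp.norm_le_of_ae_bound hC ?_
  filter_upwards [Lp.coeFn_sub f g, hfg] with x hx hx'
  rwa [hx, Pi.sub_apply]

namespace Polynomial

section GramSchmidt

variable {E : Type*} [NormedAddCommGroup E] [InnerProductSpace ℝ E]

theorem exists_degree_lt_map_eq_sub_gramSchmidt (T : ℝ[X] →ₗ[ℝ] E) (n : ℕ) :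
    ∃ r : ℝ[X], r.degree < n ∧ T r = T (X ^ n) - gramSchmidt ℝ (fun i => T (X ^ i)) n := by
  classical
  have hspan : Submodule.span ℝ ((fun i => T (X ^ i)) '' Iio n) = (degreeLT ℝ n).map T := by
    rw [degreeLT_eq_span_X_pow, Submodule.map_span, Finset.coe_image, image_image,
      Finset.coe_range, ← Iio_def]
  obtain ⟨r, hr, hTr⟩ := hspan ▸ sub_gramSchmidt_mem_span_Iio (𝕜 := ℝ) (fun i => T (X ^ i)) n
  exact ⟨r, mem_degreeLT.1 hr, hTr⟩

theorem exists_degree_eq_map_eq_gramSchmidtNormed (T : ℝ[X] →ₗ[ℝ] E)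
    (hT : LinearIndependent ℝ fun i => T (X ^ i)) (n : ℕ) :
    ∃ p : ℝ[X], p.degree = n ∧ T p = gramSchmidtNormed ℝ (fun i => T (X ^ i)) n := by
  obtain ⟨r, hr, hTr⟩ := exists_degree_lt_map_eq_sub_gramSchmidt T n
  have hc : ‖gramSchmidt ℝ (fun i => T (X ^ i)) n‖⁻¹ ≠ 0 :=
    inv_ne_zero (norm_ne_zero_iff.2 (gramSchmidt_ne_zero n hT))
  refine ⟨C ‖gramSchmidt ℝ (fun i => T (X ^ i)) n‖⁻¹ * (X ^ n - r), ?_, ?_⟩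
  · rw [degree_C_mul hc, degree_sub_eq_left_of_degree_lt] <;> rw [degree_X_pow]
    exact hr
  · rw [← smul_eq_C_mul, map_smul, map_sub, hTr, sub_sub_cancel, gramSchmidtNormed]
    simp

end GramSchmidt

section WeightedLp

variable {a b : ℝ} {w : ℝ → ℝ}

theorem memLp_eval_mul (hw : ContinuousOn w (Icc a b)) (q : ℝ[X]) :
    MemLp (fun x => q.eval x * w x) 2 (volume.restrict (Ioo a b)) := by
  have hc : ContinuousOn (fun x => q.eval x * w x) (Icc a b) := q.continuousOn.mul hw
  obtain ⟨C, hC⟩ := isCompact_Icc.exists_bound_of_continuousOn hc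
  refine MemLp.of_bound ((hc.mono Ioo_subset_Icc_self).aestronglyMeasurable measurableSet_Ioo) C ?_
  filter_upwards [ae_restrict_mem measurableSet_Ioo] with x hx
  exact hC x (Ioo_subset_Icc_self hx)

def mulToLp (hw : ContinuousOn w (Icc a b)) : ℝ[X] →ₗ[ℝ] Lp ℝ 2 (volume.restrict (Ioo a b)) where
  toFun q := (memLp_eval_mul hw q).toLp
  map_add' q r := by simp only [eval_add, add_mul]; exact MemLp.toLp_add _ _
  map_smul' c q := by
    simp only [eval_smul, smul_eq_mul, mul_assoc, RingHom.id_apply]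
    exact MemLp.toLp_const_smul c (memLp_eval_mul hw q)

theorem exists_abs_eval_mul_sub_lt (hw : ContinuousOn w (Icc a b))
    (hw0 : ∀ x ∈ Icc a b, w x ≠ 0) {g : ℝ → ℝ} (hg : ContinuousOn g (Icc a b)) {ε : ℝ}
    (hε : 0 < ε) :
    ∃ q : ℝ[X], ∀ x ∈ Icc a b, |q.eval x * w x - g x| < ε := by
  obtain ⟨M, hM⟩ := isCompact_Icc.exists_bound_of_continuousOn hw
  obtain ⟨δ, hδ, hMδ⟩ := exists_pos_mul_lt hε M
  obtain ⟨q, hq⟩ :=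
    exists_polynomial_near_of_continuousOn a b (fun x => g x / w x) (hg.div hw hw0) δ hδ
  refine ⟨q, fun x hx => ?_⟩
  calc |q.eval x * w x - g x| = |q.eval x - g x / w x| * |w x| := by
        rw [← abs_mul, sub_mul, div_mul_cancel₀ _ (hw0 x hx)]
    _ ≤ δ * M := mul_le_mul (hq x hx).le (Real.norm_eq_abs (w x) ▸ hM x hx) (abs_nonneg _) hδ.le
    _ < ε := by linarith

variable (hw : ContinuousOn w (Icc a b))

theorem coeFn_mulToLp (q : ℝ[X]) :
    mulToLp hw q =ᵐ[volume.restrict (Ioo a b)] fun x => q.eval x * w x :=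
  MemLp.coeFn_toLp (memLp_eval_mul hw q)

theorem mulToLp_injective (hab : a < b) (hw0 : ∀ x ∈ Ioo a b, w x ≠ 0) :
    Function.Injective (mulToLp hw) := by
  refine (injective_iff_map_eq_zero _).2 fun q hq => eq_zero_of_infinite_isRoot q ?_
  have hae : (fun x => q.eval x * w x) =ᵐ[volume.restrict (Ioo a b)] 0 :=
    (coeFn_mulToLp hw q).symm.trans (hq ▸ Lp.coeFn_zero _ _ _)
  have hzero := Measure.eqOn_open_of_ae_eq hae isOpen_Ioo
    ((q.continuousOn.mul hw).mono Ioo_subset_Icc_self) continuousOn_const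
  refine (Ioo_infinite hab).mono fun x hx => ?_
  exact (mul_eq_zero.1 (hzero hx)).resolve_right (hw0 x hx)

theorem linearIndependent_mulToLp_X_pow (hab : a < b) (hw0 : ∀ x ∈ Ioo a b, w x ≠ 0) :
    LinearIndependent ℝ fun n => mulToLp hw (X ^ n) := by
  have hX : LinearIndependent ℝ fun n : ℕ => (X : ℝ[X]) ^ n := by
    simpa [coe_basisMonomials, X_pow_eq_monomial] using (basisMonomials ℝ).linearIndependent
  exact hX.map' _ (LinearMap.ker_eq_bot.2 (mulToLp_injective hw hab hw0))

theorem span_mulToLp_X_pow :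
    Submodule.span ℝ (range fun n => mulToLp hw (X ^ n)) = LinearMap.range (mulToLp hw) := by
  have hX : (range fun n : ℕ => (X : ℝ[X]) ^ n) = range (basisMonomials ℝ) := by
    simp [coe_basisMonomials, X_pow_eq_monomial]
  rw [← Submodule.map_top, ← (basisMonomials ℝ).span_eq, ← hX, Submodule.map_span, ← range_comp]
  rfl

theorem dense_range_mulToLp (hw0 : ∀ x ∈ Icc a b, w x ≠ 0) :
    Dense (LinearMap.range (mulToLp hw) : Set (Lp ℝ 2 (volume.restrict (Ioo a b)))) := by
  have hbcf := Lp.boundedContinuousFunction_dense ℝ (volume.restrict (Ioo a b)) (p := 2)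
    ENNReal.ofNat_ne_top
  refine (hbcf.mono ?_).of_closure
  intro g hg
  obtain ⟨g₀, hg₀⟩ := Lp.mem_boundedContinuousFunction_iff.1 hg
  have hgg₀ : g =ᵐ[volume.restrict (Ioo a b)] g₀ :=
    hg₀ ▸ ContinuousMap.coeFn_toAEEqFun _ g₀.toContinuousMap
  refine Metric.mem_closure_iff.2 fun ε hε => ?_
  obtain ⟨η, hη, hCη⟩ := exists_pos_mul_lt hε
    ((measureUnivNNReal (volume.restrict (Ioo a b)) : ℝ) ^ (2 : ℝ≥0∞).toReal⁻¹)
  obtain ⟨q, hq⟩ := exists_abs_eval_mul_sub_lt hw hw0 g₀.continuous.continuousOn hη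
  refine ⟨mulToLp hw q, ⟨q, rfl⟩, (Lp.dist_le_of_ae_bound hη.le ?_).trans_lt hCη⟩
  filter_upwards [ae_restrict_mem measurableSet_Ioo, hgg₀, coeFn_mulToLp hw q] with x hx hgx hqx
  rw [hgx, hqx, Real.norm_eq_abs, abs_sub_comm]
  exact (hq x (Ioo_subset_Icc_self hx)).le

end WeightedLp

end Polynomial

/-- For every `R > 0` there is a Hilbert (orthonormal) basis `(Ψ_n)` of `L²((-R,R))`
(an orthonormal family with dense linear span) such that each `Ψ_n` is the class of
`x ↦ p_n(x)·e^x` for some real polynomial `p_n` of degree exactly `n`: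
the polynomial-exponential basis. -/
theorem polyExp_hilbert_basis (R : ℝ) (hR : 0 < R) :
    ∃ (Ψ : ℕ → Lp ℝ 2 (volume.restrict (Set.Ioo (-R) R))) (p : ℕ → Polynomial ℝ),
      Orthonormal ℝ Ψ ∧
      (Submodule.span ℝ (Set.range Ψ)).topologicalClosure = ⊤ ∧
      ∀ n : ℕ, (p n).degree = n ∧
        ⇑(Ψ n) =ᵐ[volume.restrict (Set.Ioo (-R) R)]
          fun x => (p n).eval x * Real.exp x := by
  have hexp : ContinuousOn Real.exp (Icc (-R) R) := Real.continuous_exp.continuousOn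
  have hli : LinearIndependent ℝ fun n => mulToLp hexp (X ^ n) :=
    linearIndependent_mulToLp_X_pow hexp (by linarith) fun x _ => Real.exp_ne_zero x
  choose p hdeg hp using exists_degree_eq_map_eq_gramSchmidtNormed (mulToLp hexp) hli
  refine ⟨gramSchmidtNormed ℝ fun n => mulToLp hexp (X ^ n), p,
    gramSchmidtNormed_orthonormal hli, ?_, fun n => ⟨hdeg n, hp n ▸ coeFn_mulToLp hexp (p n)⟩⟩
  rw [span_gramSchmidtNormed_range, span_gramSchmidt, span_mulToLp_X_pow,
    ← Submodule.dense_iff_topologicalClosure_eq_top]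
  exact dense_range_mulToLp hexp fun x _ => Real.exp_ne_zero x
end
end

section
/- Let R > 0 and let (Ψ_n)_{n ∈ ℕ} be an orthonormal family in L²((-R,R)) such that each Ψ_n is the class of x ↦ p_n(x)·e^x for a real polynomial p_n of degree exactly n. Then for all natural numbers m, n with m ≥ n, the inner product ⟨Ψ_n', Ψ_m⟩_{L²((-R,R))} = ∫_{-R}^{R} Ψ_n'(x) Ψ_m(x) dx equals 1 if m = n and equals 0 if m > n. -/
open MeasureTheory Polynomial Set

/-!
Since `Ψ_n' = (p_n' + p_n) e^x` and `deg p_n' < n`, the function `p_n' e^x` lies in the span of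
`Ψ_0, …, Ψ_{n-1}` (the `p_k` of degree `k < n` span all polynomials of degree `< n`), so it is
orthogonal to `Ψ_m` for `m ≥ n`; hence `⟨Ψ_n', Ψ_m⟩ = ⟨Ψ_n, Ψ_m⟩ = δ_{mn}`.
-/

lemma Polynomial.Sequence.map_eq_zero_of_degree_lt {K M : Type*} [Field K] [AddCommMonoid M]
    [Module K M] (S : Sequence K) (f : K[X] →ₗ[K] M) {m : ℕ} (hf : ∀ i < m, f (S i) = 0)
    {q : K[X]} (hq : q.degree < m) : f q = 0 := by
  have hspan : degreeLT K m ≤ LinearMap.ker f := by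
    rw [← S.span_degreeLT fun i _ => (leadingCoeff_ne_zero.mpr (S.ne_zero i)).isUnit,
      Submodule.span_le]
    rintro _ ⟨i, hi, rfl⟩
    exact hf i hi
  exact hspan (mem_degreeLT.mpr hq)

lemma Polynomial.deriv_eval_mul_exp (q : ℝ[X]) :
    deriv (fun y => q.eval y * Real.exp y) = fun x => (derivative q + q).eval x * Real.exp x := by
  funext x
  rw [eval_add, add_mul]
  exact ((q.hasDerivAt x).mul (Real.hasDerivAt_exp x)).deriv

lemma integral_mul_eq_ite_of_orthonormal {α ι : Type*} [MeasurableSpace α] {μ : Measure α}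
    {Ψ : ι → Lp ℝ 2 μ} (horth : Orthonormal ℝ Ψ) {f : ι → α → ℝ}
    (hf : ∀ i, Ψ i =ᵐ[μ] f i) [DecidableEq ι] (i j : ι) : ∫ x, f i x * f j x ∂μ = if i = j then 1 else 0 := by
  rw [← orthonormal_iff_ite.mp horth i j, L2.inner_def]
  refine integral_congr_ae ?_
  filter_upwards [hf i, hf j] with x hxi hxj
  simp [hxi, hxj, mul_comm]

noncomputable def Polynomial.integralMulₗ (a b : ℝ) (w : ℝ → ℝ) (hw : Continuous w) :
    ℝ[X] →ₗ[ℝ] ℝ where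
  toFun q := ∫ x in Ioo a b, q.eval x * w x
  map_add' q r := by
    have hint : ∀ s : ℝ[X], IntegrableOn (fun x => s.eval x * w x) (Ioo a b) :=
      fun s => (by fun_prop : Continuous fun x => s.eval x * w x).integrableOn_Icc.mono_set
        Ioo_subset_Icc_self
    simp only [eval_add, add_mul]
    exact integral_add (hint q) (hint r)
  map_smul' c q := by
    simp only [eval_smul, smul_eq_mul, mul_assoc, RingHom.id_apply]
    exact integral_const_mul c _

theorem polyExp_deriv_inner_products_general (R : ℝ)
    (p : ℕ → Polynomial ℝ) (hdeg : ∀ n : ℕ, (p n).degree = n)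
    (Ψ : ℕ → Lp ℝ 2 (volume.restrict (Set.Ioo (-R) R)))
    (horth : Orthonormal ℝ Ψ)
    (hΨ : ∀ n : ℕ, ⇑(Ψ n) =ᵐ[volume.restrict (Set.Ioo (-R) R)]
      fun x => (p n).eval x * Real.exp x)
    (m n : ℕ) (hmn : n ≤ m) :
    ∫ x in Set.Ioo (-R) R,
        deriv (fun y : ℝ => (p n).eval y * Real.exp y) x
          * ((p m).eval x * Real.exp x)
      = if m = n then 1 else 0 := by
  let L := integralMulₗ (-R) R (fun x => Real.exp x * ((p m).eval x * Real.exp x)) (by fun_prop)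
  have hL : ∀ q : ℝ[X],
      L q = ∫ x in Ioo (-R) R, q.eval x * Real.exp x * ((p m).eval x * Real.exp x) := fun q => by
    simp only [L, integralMulₗ, LinearMap.coe_mk, AddHom.coe_mk, mul_assoc]
  have hLp : ∀ k, L (p k) = if k = m then 1 else 0 := fun k => by
    rw [hL]; exact integral_mul_eq_ite_of_orthonormal horth hΨ k m
  let S : Sequence ℝ := ⟨p, hdeg⟩
  have hL_deriv : L (derivative (p n)) = 0 :=
    S.map_eq_zero_of_degree_lt L (fun i hi => (hLp i).trans (if_neg hi.ne))
      ((degree_derivative_lt (S.ne_zero n)).trans_le ((hdeg n).trans_le (by exact_mod_cast hmn)))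
  calc _ = L (derivative (p n) + p n) := by rw [deriv_eval_mul_exp, hL]
    _ = if m = n then 1 else 0 := by rw [map_add, hL_deriv, zero_add, hLp]; simp [eq_comm]

/-- Let `R > 0` and `(Ψ_n)` be an orthonormal family in `L²((-R,R))` with `Ψ_n`
the class of `x ↦ p_n(x)·e^x`, `deg p_n = n`.  Then for all `m ≥ n`,
`⟨Ψ_n', Ψ_m⟩ = ∫_{-R}^R Ψ_n'(x) Ψ_m(x) dx` equals `1` if `m = n` and `0` if `m > n`. -/
theorem polyExp_deriv_inner_products (R : ℝ) (hR : 0 < R)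
    (p : ℕ → Polynomial ℝ) (hdeg : ∀ n : ℕ, (p n).degree = n)
    (Ψ : ℕ → Lp ℝ 2 (volume.restrict (Set.Ioo (-R) R)))
    (horth : Orthonormal ℝ Ψ)
    (hΨ : ∀ n : ℕ, ⇑(Ψ n) =ᵐ[volume.restrict (Set.Ioo (-R) R)]
      fun x => (p n).eval x * Real.exp x)
    (m n : ℕ) (hmn : n ≤ m) :
    ∫ x in Set.Ioo (-R) R,
        deriv (fun y : ℝ => (p n).eval y * Real.exp y) x
          * ((p m).eval x * Real.exp x)
      = if m = n then 1 else 0 :=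
  polyExp_deriv_inner_products_general R p hdeg Ψ horth hΨ m n hmn
end
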